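/- Let a = (a₁,…,a_n) ∈ ℕⁿ and a' = (a₁,…,a_n, −Σ_{i=1}^n a_i). Then the number of extreme points of the flow polytope F_{K_{n+1}}(a') equals the number of a-Tesler tableaux of dimension 0. -/

import Mathlib

/-!
A point `x` of `{x ≥ 0 | L x = b}` is extreme iff no nonzero vector of `ker L` is supported
inside the support of `x`. For a flow polytope whose netflow is nonnegative at every node except
the sink, this says that the extreme points are the flows using at most one outgoing edge at each
node: two positive edges leaving one node can both be continued along positive edges to the sink,
and the two walks differ by a circulation inside the support; conversely a circulation supported
on edges with distinct tails vanishes, node by node in increasing order, since the inflow of a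
node is already zero.

Reading the support as a filling of the staircase, with edge `(i, j)` in cell `(i, j)` for `j ≤ n`
and edge `(i, n+1)` in the diagonal cell `(i, i)`, flow conservation `out = a_i + in` turns into
the three Tesler conditions, and "one outgoing edge per node" into dimension `0`. Conversely a
tableau of dimension `0` determines its flow: node `i` sends `a_i` plus everything it receives
along the unique edge of its row, which is positive exactly on the nonzero rows.
-/

open Finset

/-- The edge set of the complete graph `K_{n+1}`: pairs `(i,j)` with `i < j`. -/
abbrev FlowEdge (n : ℕ) := {p : Fin (n + 1) × Fin (n + 1) // p.1 < p.2}

/-- The flow polytope `F_{K_{n+1}}(a)` of the complete graph `K_{n+1}` with netflow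
vector `a`: nonnegative functions on the edge set such that at every vertex `k`,
(outgoing flow) − (incoming flow) = `a k`. -/
def flowPolytope (n : ℕ) (a : Fin (n + 1) → ℝ) : Set (FlowEdge n → ℝ) :=
  {f | (∀ e, 0 ≤ f e) ∧
    ∀ k : Fin (n + 1),
      (∑ e : FlowEdge n, if e.1.1 = k then f e else 0)
        - (∑ e : FlowEdge n, if e.1.2 = k then f e else 0) = a k}

/-- An `a`-Tesler tableau: a `{0,1}`-filling `T` of the shifted staircase
`{(i,j) : i ≤ j}` (encoded as a full matrix that is `false` below the diagonal)
such that (1) if `a i > 0` then row `i` is nonzero; (2) if `T i j = 1` with `i < j`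
then row `j` is nonzero; (3) if `a j = 0` and column `j` is zero above the diagonal,
then row `j` is zero. -/
def IsTesler {n : ℕ} (a : Fin n → ℕ) (T : Fin n → Fin n → Bool) : Prop :=
  (∀ i j : Fin n, j < i → T i j = false) ∧
  (∀ i : Fin n, 0 < a i → ∃ j, i ≤ j ∧ T i j = true) ∧
  (∀ i j : Fin n, i < j → T i j = true → ∃ k, j ≤ k ∧ T j k = true) ∧
  (∀ j : Fin n, a j = 0 → (∀ i, i < j → T i j = false) →
    ∀ k, j ≤ k → T j k = false)

/-- A Tesler tableau has dimension `0` iff its total number of `1`'s equals its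
number of nonzero rows. -/
def TeslerDimZero {n : ℕ} (T : Fin n → Fin n → Bool) : Prop :=
  (Finset.univ.filter fun p : Fin n × Fin n => T p.1 p.2 = true).card
    = (Finset.univ.filter fun i : Fin n => ∃ j, T i j = true).card

open Function Filter Topology Matrix

section NonnegLinearSystem

variable {ι M : Type*} [AddCommGroup M] [Module ℝ M]

lemma exists_pos_nonneg_add_smul_and_sub_smul [Finite ι] {x d : ι → ℝ} (hx : 0 ≤ x)
    (hd : support d ⊆ support x) : ∃ ε : ℝ, 0 < ε ∧ 0 ≤ x + ε • d ∧ 0 ≤ x - ε • d := by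
  have hnear : ∀ᶠ ε in 𝓝 (0 : ℝ), ∀ i, 0 ≤ x i + ε * d i ∧ 0 ≤ x i - ε * d i := by
    refine eventually_all.2 fun i => ?_
    by_cases hdi : d i = 0
    · simpa [hdi] using hx i
    have hxi : 0 < x i := (hx i).lt_of_ne' (hd hdi)
    have hplus : ∀ᶠ ε in 𝓝 (0 : ℝ), 0 < x i + ε * d i :=
      continuousAt_const.eventually_lt (by fun_prop) (by simpa using hxi)
    have hminus : ∀ᶠ ε in 𝓝 (0 : ℝ), 0 < x i - ε * d i :=
      continuousAt_const.eventually_lt (by fun_prop) (by simpa using hxi)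
    filter_upwards [hplus, hminus] with ε h₁ h₂ using ⟨h₁.le, h₂.le⟩
  obtain ⟨ε, hε, hpos⟩ :=
    ((hnear.filter_mono nhdsWithin_le_nhds).and self_mem_nhdsWithin).exists (f := 𝓝[>] 0)
  exact ⟨ε, hpos, fun i => (hε i).1, fun i => (hε i).2⟩

theorem mem_extremePoints_nonneg_preimage_iff [Finite ι] (L : (ι → ℝ) →ₗ[ℝ] M) {b : M}
    {x : ι → ℝ} (hx : x ∈ {y | 0 ≤ y ∧ L y = b}) :
    x ∈ Set.extremePoints ℝ {y | 0 ≤ y ∧ L y = b} ↔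
      ∀ d, L d = 0 → support d ⊆ support x → d = 0 := by
  rw [mem_extremePoints]
  constructor
  · rintro ⟨-, hext⟩ d hLd hd
    obtain ⟨ε, hε, hplus, hminus⟩ := exists_pos_nonneg_add_smul_and_sub_smul hx.1 hd
    have hmid : x ∈ openSegment ℝ (x + ε • d) (x - ε • d) :=
      ⟨1 / 2, 1 / 2, by norm_num, by norm_num, by norm_num, by module⟩
    have := (hext _ ⟨hplus, by simp [hLd, hx.2]⟩ _ ⟨hminus, by simp [hLd, hx.2]⟩ hmid).1
    simpa [hε.ne'] using this
  · refine fun hker => ⟨hx, ?_⟩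
    -- `y` vanishes wherever `x` does, so `y - x` is a kernel vector supported in `support x`
    have key : ∀ y ∈ {y | 0 ≤ y ∧ L y = b}, ∀ z ∈ {y | 0 ≤ y ∧ L y = b},
        x ∈ openSegment ℝ y z → y = x := by
      rintro y ⟨hy, hLy⟩ z ⟨hz, -⟩ ⟨c, c', hc, hc', -, rfl⟩
      refine sub_eq_zero.1 (hker _ (by simp [hLy, hx.2]) fun i hi h0 => hi ?_)
      simp only [Pi.add_apply, Pi.smul_apply, smul_eq_mul] at h0
      have hyi : 0 ≤ y i := hy i
      have hzi : 0 ≤ z i := hz i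
      simp only [Pi.sub_apply, Pi.add_apply, Pi.smul_apply, smul_eq_mul]
      rw [h0, sub_zero]
      nlinarith
    exact fun y hy z hz hseg => ⟨key y hy z hz hseg, key z hz y hy (openSegment_symm ℝ y z ▸ hseg)⟩

end NonnegLinearSystem

namespace FlowEdge

variable {n : ℕ}

def incidence (n : ℕ) : Matrix (Fin (n + 1)) (FlowEdge n) ℝ :=
  fun k e => (if e.1.1 = k then 1 else 0) - (if e.1.2 = k then 1 else 0)

def outflow (f : FlowEdge n → ℝ) (k : Fin (n + 1)) : ℝ := ∑ e with e.1.1 = k, f e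

def inflow (f : FlowEdge n → ℝ) (k : Fin (n + 1)) : ℝ := ∑ e with e.1.2 = k, f e

lemma incidence_mulVec_apply (f : FlowEdge n → ℝ) (k : Fin (n + 1)) :
    (incidence n *ᵥ f) k = outflow f k - inflow f k := by
  simp only [Matrix.mulVec, dotProduct, incidence, sub_mul, ite_mul, one_mul, zero_mul,
    sum_sub_distrib, outflow, inflow, sum_filter]

lemma incidence_mulVec_single (e : FlowEdge n) :
    incidence n *ᵥ Pi.single e 1 = Pi.single e.1.1 1 - Pi.single e.1.2 1 := by
  ext k
  simp [incidence, Pi.single_apply, eq_comm]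

lemma sum_incidence_mulVec (f : FlowEdge n → ℝ) : ∑ k, (incidence n *ᵥ f) k = 0 := by
  simp only [incidence_mulVec_apply, sum_sub_distrib, outflow, inflow, sum_fiberwise, sub_self]

lemma flowPolytope_eq (a : Fin (n + 1) → ℝ) :
    flowPolytope n a = {f | 0 ≤ f ∧ (incidence n).mulVecLin f = a} := by
  ext f
  simp only [flowPolytope, Set.mem_ofPred_eq, Matrix.mulVecLin_apply, funext_iff,
    incidence_mulVec_apply, outflow, inflow, sum_filter, Pi.le_def, Pi.zero_apply]

lemma mem_flowPolytope_iff_castSucc {a : Fin (n + 1) → ℝ} (ha : ∑ k, a k = 0)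
    {f : FlowEdge n → ℝ} :
    f ∈ flowPolytope n a ↔ 0 ≤ f ∧ ∀ i : Fin n, (incidence n *ᵥ f) i.castSucc = a i.castSucc := by
  rw [flowPolytope_eq, Set.mem_ofPred_eq, Matrix.mulVecLin_apply]
  refine and_congr_right fun _ => ⟨fun h i => by rw [h], fun h => funext fun k => ?_⟩
  induction k using Fin.lastCases with
  | cast i => exact h i
  | last =>
    -- both sides sum to zero over all vertices
    have hflow := sum_incidence_mulVec f
    rw [Fin.sum_univ_castSucc] at ha hflow
    simp only [h] at hflow
    linarith

lemma inflow_nonneg {f : FlowEdge n → ℝ} (hf : 0 ≤ f) (k : Fin (n + 1)) : 0 ≤ inflow f k :=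
  sum_nonneg fun e _ => hf e

lemma le_inflow {f : FlowEdge n → ℝ} (hf : 0 ≤ f) (e : FlowEdge n) : f e ≤ inflow f e.1.2 :=
  single_le_sum (fun e' _ => hf e') (mem_filter.2 ⟨mem_univ e, rfl⟩)

/-- `p` is the indicator of a walk from `w` to the sink along positive edges of `f`; it exists
because every vertex before the sink has nonnegative netflow, so positive inflow forces a positive
outgoing edge. -/
lemma exists_path_to_last {a : Fin (n + 1) → ℝ} (ha : ∀ k ≠ Fin.last n, 0 ≤ a k)
    {f : FlowEdge n → ℝ} (hf : f ∈ flowPolytope n a) (w : Fin (n + 1))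
    (hw : ∃ e : FlowEdge n, e.1.2 = w ∧ 0 < f e) :
    ∃ p : FlowEdge n → ℝ, incidence n *ᵥ p = Pi.single w 1 - Pi.single (Fin.last n) 1 ∧
      ∀ e, p e ≠ 0 → 0 < f e ∧ w ≤ e.1.1 := by
  rw [flowPolytope_eq] at hf
  obtain ⟨hf0, hfa⟩ := hf
  induction w using WellFoundedGT.induction with
  | _ w ih =>
  by_cases hlast : w = Fin.last n
  · exact ⟨0, by simp [hlast], by simp⟩
  obtain ⟨e, rfl, he⟩ := hw
  have hout : 0 < outflow f e.1.2 := by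
    have hcons := congrFun hfa e.1.2
    rw [Matrix.mulVecLin_apply, incidence_mulVec_apply] at hcons
    linarith [ha _ hlast, le_inflow hf0 e]
  obtain ⟨e', he'w, he'⟩ := (sum_pos_iff_of_nonneg fun e _ => hf0 e).1 hout
  rw [mem_filter] at he'w
  have hlt : e.1.2 < e'.1.2 := he'w.2 ▸ e'.2
  obtain ⟨p, hp, hsupp⟩ := ih _ hlt ⟨e', rfl, he'⟩
  refine ⟨Pi.single e' 1 + p, ?_, fun e'' he'' => ?_⟩
  · rw [mulVec_add, incidence_mulVec_single, hp, he'w.2]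
    abel
  · by_cases h : e'' = e'
    · exact h ▸ ⟨he', he'w.2.ge⟩
    · have hp'' : p e'' ≠ 0 := by simpa [h] using he''
      exact ⟨(hsupp e'' hp'').1, hlt.le.trans (hsupp e'' hp'').2⟩

lemma eq_zero_of_incidence_mulVec_eq_zero {S : Set (FlowEdge n)}
    (hS : S.InjOn fun e => e.1.1) {d : FlowEdge n → ℝ} (hd : support d ⊆ S)
    (hcirc : incidence n *ᵥ d = 0) : d = 0 := by
  suffices ∀ k, ∀ e : FlowEdge n, e.1.1 = k → d e = 0 from funext fun e => this _ e rfl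
  intro k
  induction k using WellFoundedLT.induction with
  | _ k ih =>
  intro e rfl
  have hin : inflow d e.1.1 = 0 :=
    sum_eq_zero fun e' he' => ih _ ((mem_filter.1 he').2 ▸ e'.2) e' rfl
  have hout : outflow d e.1.1 = 0 := by
    have hcons := congrFun hcirc e.1.1
    rwa [incidence_mulVec_apply, hin, Pi.zero_apply, sub_zero] at hcons
  by_contra hde
  have hsingle : outflow d e.1.1 = d e :=
    sum_eq_single_of_mem e (mem_filter.2 ⟨mem_univ e, rfl⟩) fun e' he' hne => by
      by_contra hde'
      exact hne (hS (hd hde') (hd hde) (mem_filter.1 he').2)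
  exact hde (hsingle ▸ hout)

end FlowEdge

open FlowEdge

theorem mem_extremePoints_flowPolytope_iff {n : ℕ} {a : Fin (n + 1) → ℝ}
    (ha : ∀ k ≠ Fin.last n, 0 ≤ a k) {f : FlowEdge n → ℝ} :
    f ∈ Set.extremePoints ℝ (flowPolytope n a) ↔
      f ∈ flowPolytope n a ∧ (support f).InjOn fun e => e.1.1 := by
  refine ⟨fun hext => ⟨hext.1, ?_⟩, fun ⟨hf, hinj⟩ => ?_⟩
  · have hf := hext.1
    rw [flowPolytope_eq, mem_extremePoints_nonneg_preimage_iff _ (flowPolytope_eq a ▸ hf)] at hext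
    intro e₁ he₁ e₂ he₂ htail
    simp only at htail
    by_contra hne
    have hpos : ∀ e ∈ support f, 0 < f e := fun e he => (hf.1 e).lt_of_ne' he
    obtain ⟨p₁, hp₁, hsupp₁⟩ := exists_path_to_last ha hf _ ⟨e₁, rfl, hpos e₁ he₁⟩
    obtain ⟨p₂, hp₂, hsupp₂⟩ := exists_path_to_last ha hf _ ⟨e₂, rfl, hpos e₂ he₂⟩
    -- the two walks from the common tail to the sink form a circulation in the support of `f`
    set d := (Pi.single e₁ 1 + p₁) - (Pi.single e₂ 1 + p₂)
    have hd0 : d = 0 := by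
      refine hext d ?_ fun e he => ?_
      · rw [Matrix.mulVecLin_apply, mulVec_sub, mulVec_add, mulVec_add, incidence_mulVec_single,
          incidence_mulVec_single, hp₁, hp₂, htail]
        abel
      · by_contra hfe
        have h₁ : e ≠ e₁ := fun h => hfe (h ▸ he₁)
        have h₂ : e ≠ e₂ := fun h => hfe (h ▸ he₂)
        have hp₁e : p₁ e = 0 := by
          by_contra h; exact hfe (hsupp₁ e h).1.ne'
        have hp₂e : p₂ e = 0 := by
          by_contra h; exact hfe (hsupp₂ e h).1.ne'
        exact he (by simp [d, h₁, h₂, hp₁e, hp₂e])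
    have hp₁e₁ : p₁ e₁ = 0 := by
      by_contra h; exact (hsupp₁ e₁ h).2.not_gt e₁.2
    have hp₂e₁ : p₂ e₁ = 0 := by
      by_contra h; exact (hsupp₂ e₁ h).2.not_gt (htail ▸ e₂.2)
    simpa [d, hp₁e₁, hp₂e₁, hne] using congrFun hd0 e₁
  · rw [flowPolytope_eq, mem_extremePoints_nonneg_preimage_iff _ (flowPolytope_eq a ▸ hf)]
    exact fun d hd hsupp => eq_zero_of_incidence_mulVec_eq_zero hinj hsupp hd

namespace FlowEdge

variable {n : ℕ}

def row (e : FlowEdge n) : Fin n := e.1.1.castPred (Fin.ne_last_of_lt e.2)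

def col (e : FlowEdge n) : Fin n :=
  if h : e.1.2 = Fin.last n then row e else e.1.2.castPred h

/-- The diagonal cell `(i, i)` stands for the edge from `i` to the sink `n + 1`. -/
def cellEdge (i j : Fin n) : FlowEdge n :=
  ⟨(i.castSucc, if i < j then j.castSucc else Fin.last n), by
    split_ifs with h
    exacts [Fin.castSucc_lt_castSucc_iff.2 h, Fin.castSucc_lt_last i]⟩

lemma castSucc_row (e : FlowEdge n) : (row e).castSucc = e.1.1 := Fin.castSucc_castPred _ _

@[simp] lemma row_cellEdge (i j : Fin n) : row (cellEdge i j) = i := by simp [row, cellEdge]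

lemma col_cellEdge {i j : Fin n} (h : i ≤ j) : col (cellEdge i j) = j := by
  rcases h.lt_or_eq with h | rfl
  · simp [col, cellEdge, h, (Fin.castSucc_lt_last j).ne]
  · simp [col, cellEdge, row]

lemma col_eq_of_head_eq {e : FlowEdge n} {j : Fin n} (h : e.1.2 = j.castSucc) : col e = j := by
  simp [col, h, (Fin.castSucc_lt_last j).ne]

lemma row_le_col (e : FlowEdge n) : row e ≤ col e := by
  unfold col
  split_ifs with h
  · exact le_rfl
  · rw [← Fin.castSucc_le_castSucc_iff, castSucc_row, Fin.castSucc_castPred]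
    exact e.2.le

lemma cellEdge_row_col (e : FlowEdge n) : cellEdge (row e) (col e) = e := by
  apply Subtype.ext
  ext1
  · exact castSucc_row e
  · simp only [cellEdge, col]
    split_ifs with hlast hlt hlt
    · exact absurd hlt (lt_irrefl _)
    · exact hlast.symm
    · exact Fin.castSucc_castPred _ _
    · rw [← Fin.castSucc_lt_castSucc_iff, castSucc_row, Fin.castSucc_castPred] at hlt
      exact absurd e.2 hlt

lemma outflow_castSucc (f : FlowEdge n → ℝ) (i : Fin n) :
    outflow f i.castSucc = ∑ j with i ≤ j, f (cellEdge i j) := by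
  refine sum_nbij' col (cellEdge i) (fun e he => ?_) (fun j _ => by simp [cellEdge])
    (fun e he => ?_) (fun j hj => col_cellEdge (mem_filter.1 hj).2) (fun e he => ?_)
  all_goals
    have hrow : row e = i :=
      Fin.castSucc_injective _ (by rw [castSucc_row]; exact (mem_filter.1 he).2)
  · exact mem_filter.2 ⟨mem_univ _, hrow ▸ row_le_col e⟩
  · rw [← hrow, cellEdge_row_col]
  · rw [← hrow, cellEdge_row_col]

lemma inflow_castSucc (f : FlowEdge n → ℝ) (j : Fin n) :
    inflow f j.castSucc = ∑ k with k < j, f (cellEdge k j) := by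
  refine sum_nbij' row (cellEdge · j) (fun e he => ?_)
    (fun k hk => by simp [cellEdge, (mem_filter.1 hk).2])
    (fun e he => ?_) (fun k _ => row_cellEdge k j) (fun e he => ?_)
  all_goals
    have hcol : col e = j := col_eq_of_head_eq (mem_filter.1 he).2
  · refine mem_filter.2 ⟨mem_univ _, ?_⟩
    rw [← Fin.castSucc_lt_castSucc_iff, castSucc_row, ← (mem_filter.1 he).2]
    exact e.2
  · rw [← hcol, cellEdge_row_col]
  · rw [← hcol, cellEdge_row_col]

end FlowEdge

def augmentedNetflow {n : ℕ} (a : Fin n → ℕ) : Fin (n + 1) → ℝ :=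
  fun k => if h : (k : ℕ) < n then (a ⟨k, h⟩ : ℝ) else -∑ i, (a i : ℝ)

section AugmentedNetflow

variable {n : ℕ} {a : Fin n → ℕ}

@[simp] lemma augmentedNetflow_castSucc (a : Fin n → ℕ) (i : Fin n) :
    augmentedNetflow a i.castSucc = a i := by
  simp [augmentedNetflow]

lemma augmentedNetflow_nonneg (a : Fin n → ℕ) :
    ∀ k ≠ Fin.last n, 0 ≤ augmentedNetflow a k := by
  intro k hk
  obtain ⟨i, rfl⟩ := Fin.exists_castSucc_eq.2 hk
  simp

lemma sum_augmentedNetflow (a : Fin n → ℕ) : ∑ k, augmentedNetflow a k = 0 := by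
  simp [Fin.sum_univ_castSucc, augmentedNetflow]

lemma outflow_eq_add_inflow {f : FlowEdge n → ℝ} (hf : f ∈ flowPolytope n (augmentedNetflow a))
    (i : Fin n) : outflow f i.castSucc = a i + inflow f i.castSucc := by
  have hcons := ((mem_flowPolytope_iff_castSucc (sum_augmentedNetflow a)).1 hf).2 i
  rw [incidence_mulVec_apply, augmentedNetflow_castSucc] at hcons
  linarith

end AugmentedNetflow

namespace TeslerTableau

variable {n : ℕ} {a : Fin n → ℕ}

lemma teslerDimZero_iff {T : Fin n → Fin n → Bool} :
    TeslerDimZero T ↔ ∀ i j k, T i j = true → T i k = true → j = k := by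
  have himage : (univ.filter fun i : Fin n => ∃ j, T i j = true)
      = (univ.filter fun p : Fin n × Fin n => T p.1 p.2 = true).image Prod.fst := by
    ext i; simp
  rw [TeslerDimZero, himage, eq_comm, card_image_iff]
  simp only [Set.InjOn, coe_filter, mem_univ, true_and, Set.mem_ofPred_eq, Prod.forall,
    Prod.mk.injEq]
  exact ⟨fun h i j k hj hk => (h i j hj i k hk rfl).2,
    fun h i j hj i' k hk hii' => ⟨hii', h i j k hj (hii' ▸ hk)⟩⟩

noncomputable def ofFlow (f : FlowEdge n → ℝ) : Fin n → Fin n → Bool :=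
  fun i j => decide (i ≤ j ∧ f (cellEdge i j) ≠ 0)

lemma ofFlow_row_col (f : FlowEdge n → ℝ) (e : FlowEdge n) :
    ofFlow f (row e) (col e) = true ↔ f e ≠ 0 := by
  simp [ofFlow, row_le_col, cellEdge_row_col]

lemma exists_ofFlow_iff {f : FlowEdge n → ℝ} (hf : 0 ≤ f) (i : Fin n) :
    (∃ j, i ≤ j ∧ ofFlow f i j = true) ↔ 0 < outflow f i.castSucc := by
  rw [outflow_castSucc, sum_pos_iff_of_nonneg fun j _ => hf (cellEdge i j)]
  simp only [ofFlow, decide_eq_true_eq, mem_filter, mem_univ, true_and]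
  exact exists_congr fun j => and_congr_right fun hij =>
    ⟨fun h => (hf _).lt_of_ne' h.2, fun h => ⟨hij, h.ne'⟩⟩

lemma exists_lt_ofFlow_iff {f : FlowEdge n → ℝ} (hf : 0 ≤ f) (j : Fin n) :
    (∃ i < j, ofFlow f i j = true) ↔ 0 < inflow f j.castSucc := by
  rw [inflow_castSucc, sum_pos_iff_of_nonneg fun k _ => hf (cellEdge k j)]
  simp only [ofFlow, decide_eq_true_eq, mem_filter, mem_univ, true_and]
  exact exists_congr fun i => and_congr_right fun hij =>
    ⟨fun h => (hf _).lt_of_ne' h.2, fun h => ⟨hij.le, h.ne'⟩⟩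

lemma isTesler_ofFlow {f : FlowEdge n → ℝ} (hf : f ∈ flowPolytope n (augmentedNetflow a)) :
    IsTesler a (ofFlow f) := by
  have hf0 : 0 ≤ f := hf.1
  have hcons := outflow_eq_add_inflow hf
  refine ⟨fun i j hji => by simp [ofFlow, hji.not_ge], fun i hai => ?_, fun i j hij hT => ?_,
    fun j haj hcol k hjk => ?_⟩
  · refine (exists_ofFlow_iff hf0 i).2 ?_
    have : (0 : ℝ) < a i := by exact_mod_cast hai
    linarith [hcons i, inflow_nonneg hf0 i.castSucc]
  · refine (exists_ofFlow_iff hf0 j).2 ?_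
    linarith [hcons j, (exists_lt_ofFlow_iff hf0 j).1 ⟨i, hij, hT⟩, (a j).cast_nonneg (α := ℝ)]
  · have hin : ¬ 0 < inflow f j.castSucc := fun h => by
      obtain ⟨i, hij, hT⟩ := (exists_lt_ofFlow_iff hf0 j).2 h
      simp [hcol i hij] at hT
    have hout : ¬ 0 < outflow f j.castSucc := by
      rw [hcons j, haj, Nat.cast_zero, zero_add]; exact hin
    rw [← exists_ofFlow_iff hf0] at hout
    simpa using fun h => hout ⟨k, hjk, h⟩

lemma teslerDimZero_ofFlow {f : FlowEdge n → ℝ} (hf : (support f).InjOn fun e => e.1.1) :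
    TeslerDimZero (ofFlow f) := by
  rw [teslerDimZero_iff]
  intro i j k hj hk
  simp only [ofFlow, decide_eq_true_eq] at hj hk
  have := hf hj.2 hk.2 rfl
  rw [← col_cellEdge hj.1, ← col_cellEdge hk.1, this]

/-- The amount `a i + inflow(i)` that vertex `i` sends along the unique edge of its row. -/
def throughput (a : Fin n → ℕ) (T : Fin n → Fin n → Bool) (i : Fin n) : ℕ :=
  a i + ∑ k : Fin n, if _ : k < i then (if T k i then throughput a T k else 0) else 0
termination_by i

lemma throughput_eq (a : Fin n → ℕ) (T : Fin n → Fin n → Bool) (i : Fin n) :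
    throughput a T i = a i + ∑ k with k < i, if T k i then throughput a T k else 0 := by
  rw [throughput, sum_filter]
  simp only [dite_eq_ite]

variable {T : Fin n → Fin n → Bool}

lemma le_of_isTesler (hT : IsTesler a T) {i j : Fin n} (h : T i j = true) : i ≤ j :=
  le_of_not_gt fun hji => by simp [hT.1 i j hji] at h

lemma throughput_eq_zero (hT : IsTesler a T) {i : Fin n} (hi : ∀ j, T i j = false) :
    throughput a T i = 0 := by
  have hai : a i = 0 := by
    by_contra h
    obtain ⟨j, -, hj⟩ := hT.2.1 i (Nat.pos_of_ne_zero h)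
    simp [hi j] at hj
  rw [throughput_eq, hai, zero_add]
  refine sum_eq_zero fun k hk => ?_
  have hT' : T k i = false := by
    by_contra h
    obtain ⟨j, -, hj⟩ := hT.2.2.1 k i (mem_filter.1 hk).2 (by simpa using h)
    simp [hi j] at hj
  simp [hT']

lemma throughput_pos (hT : IsTesler a T) {i : Fin n} (hi : ∃ j, T i j = true) :
    0 < throughput a T i := by
  induction i using WellFoundedLT.induction with
  | _ i ih =>
  rw [throughput_eq]
  rcases Nat.eq_zero_or_pos (a i) with hai | hai
  · obtain ⟨k, hki, hk⟩ : ∃ k < i, T k i = true := by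
      by_contra! h
      obtain ⟨j, hj⟩ := hi
      simp [hT.2.2.2 i hai (fun k hk => by simpa using h k hk) j (le_of_isTesler hT hj)] at hj
    calc 0 < throughput a T k := ih k hki ⟨i, hk⟩
      _ = if T k i then throughput a T k else 0 := by rw [if_pos hk]
      _ ≤ ∑ k with k < i, if T k i then throughput a T k else 0 :=
        single_le_sum (f := fun k => if T k i then throughput a T k else 0)
          (fun _ _ => Nat.zero_le _) (mem_filter.2 ⟨mem_univ k, hki⟩)
      _ ≤ _ := Nat.le_add_left _ _
  · exact Nat.lt_add_right _ hai

noncomputable def flow (a : Fin n → ℕ) (T : Fin n → Fin n → Bool) : FlowEdge n → ℝ :=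
  fun e => if T (row e) (col e) then (throughput a T (row e) : ℝ) else 0

lemma flow_cellEdge {i j : Fin n} (h : i ≤ j) :
    flow a T (cellEdge i j) = if T i j then (throughput a T i : ℝ) else 0 := by
  simp [flow, col_cellEdge h]

lemma flow_nonneg : 0 ≤ flow a T := fun e => by
  unfold flow
  split_ifs <;> positivity

lemma outflow_flow (hT : IsTesler a T) (hdz : ∀ i j k, T i j = true → T i k = true → j = k)
    (i : Fin n) : outflow (flow a T) i.castSucc = throughput a T i := by
  rw [outflow_castSucc]
  by_cases hrow : ∃ j, T i j = true
  · obtain ⟨j, hj⟩ := hrow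
    rw [sum_eq_single_of_mem j (mem_filter.2 ⟨mem_univ j, le_of_isTesler hT hj⟩),
      flow_cellEdge (le_of_isTesler hT hj), if_pos hj]
    intro k hk hkj
    have : T i k = false := by
      by_contra h
      exact hkj (hdz i k j (by simpa using h) hj)
    rw [flow_cellEdge (mem_filter.1 hk).2, this]; rfl
  · simp only [not_exists, Bool.not_eq_true] at hrow
    rw [throughput_eq_zero hT hrow, Nat.cast_zero]
    exact sum_eq_zero fun k hk => by rw [flow_cellEdge (mem_filter.1 hk).2, hrow]; rfl

lemma inflow_flow (i : Fin n) : inflow (flow a T) i.castSucc = throughput a T i - a i := by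
  rw [inflow_castSucc, throughput_eq, Nat.cast_add, add_sub_cancel_left, Nat.cast_sum]
  refine sum_congr rfl fun k hk => ?_
  rw [flow_cellEdge (mem_filter.1 hk).2.le]
  split_ifs <;> simp

lemma flow_mem_flowPolytope (hT : IsTesler a T)
    (hdz : ∀ i j k, T i j = true → T i k = true → j = k) :
    flow a T ∈ flowPolytope n (augmentedNetflow a) := by
  rw [mem_flowPolytope_iff_castSucc (sum_augmentedNetflow a)]
  refine ⟨flow_nonneg, fun i => ?_⟩
  rw [incidence_mulVec_apply, outflow_flow hT hdz, inflow_flow, augmentedNetflow_castSucc]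
  ring

lemma injOn_support_flow (hdz : ∀ i j k, T i j = true → T i k = true → j = k) :
    (support (flow a T)).InjOn fun e => e.1.1 := by
  have hT : ∀ e ∈ support (flow a T), T (row e) (col e) = true := fun e he => by
    by_contra h
    simp [flow, h] at he
  intro e he e' he' htail
  have hrow : row e = row e' := Fin.castSucc_injective _ (by simpa [castSucc_row] using htail)
  have hcol : col e = col e' := hdz _ _ _ (hT e he) (hrow ▸ hT e' he')
  rw [← cellEdge_row_col e, ← cellEdge_row_col e', hrow, hcol]

lemma ofFlow_flow (hT : IsTesler a T) : ofFlow (flow a T) = T := by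
  funext i j
  by_cases hij : i ≤ j
  · cases h : T i j
    · simp [ofFlow, flow_cellEdge hij, h]
    · simp [ofFlow, flow_cellEdge hij, h, hij, (throughput_pos hT ⟨j, h⟩).ne']
  · simp [ofFlow, hij, hT.1 i j (lt_of_not_ge hij)]

end TeslerTableau

open TeslerTableau

lemma mem_extremePoints_augmented_iff {n : ℕ} {a : Fin n → ℕ} {f : FlowEdge n → ℝ} :
    f ∈ Set.extremePoints ℝ (flowPolytope n (augmentedNetflow a)) ↔
      f ∈ flowPolytope n (augmentedNetflow a) ∧ (support f).InjOn fun e => e.1.1 :=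
  mem_extremePoints_flowPolytope_iff (augmentedNetflow_nonneg a)

noncomputable def vertexTableau {n : ℕ} (a : Fin n → ℕ) :
    Set.extremePoints ℝ (flowPolytope n (augmentedNetflow a)) →
      {T : Fin n → Fin n → Bool // IsTesler a T ∧ TeslerDimZero T} :=
  fun f => ⟨ofFlow f, isTesler_ofFlow (mem_extremePoints_augmented_iff.1 f.2).1,
    teslerDimZero_ofFlow (mem_extremePoints_augmented_iff.1 f.2).2⟩

lemma vertexTableau_bijective {n : ℕ} (a : Fin n → ℕ) : Bijective (vertexTableau a) := by
  refine ⟨fun ⟨f, hf⟩ ⟨g, hg⟩ hfg => ?_, fun ⟨T, hT, hdz⟩ => ?_⟩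
  · rw [mem_extremePoints_augmented_iff, flowPolytope_eq] at hf hg
    have hsame : ofFlow f = ofFlow g := congrArg Subtype.val hfg
    have hsupp : ∀ e, f e = 0 → g e = 0 := fun e hfe => by
      by_contra hge
      exact (ofFlow_row_col f e).1 (hsame ▸ (ofFlow_row_col g e).2 hge) hfe
    have hdiff : f - g = 0 := by
      refine eq_zero_of_incidence_mulVec_eq_zero hf.2 (fun e he hfe => he ?_) ?_
      · simp [hfe, hsupp e hfe]
      · rw [mulVec_sub, ← mulVecLin_apply, ← mulVecLin_apply, hf.1.2, hg.1.2, sub_self]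
    exact Subtype.ext (sub_eq_zero.1 hdiff)
  · rw [teslerDimZero_iff] at hdz
    exact ⟨⟨flow a T, mem_extremePoints_augmented_iff.2
      ⟨flow_mem_flowPolytope hT hdz, injOn_support_flow hdz⟩⟩, Subtype.ext (ofFlow_flow hT)⟩

/-- For `a ∈ ℕⁿ` and `a' = (a₁,…,a_n, −Σ aᵢ)`, the number of vertices (extreme
points) of the flow polytope `F_{K_{n+1}}(a')` equals the number of `a`-Tesler
tableaux of dimension `0`. -/
theorem stmt12 (n : ℕ) (a : Fin n → ℕ) :
    (Set.extremePoints ℝ (flowPolytope n (fun k =>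
        if h : (k : ℕ) < n then (a ⟨(k : ℕ), h⟩ : ℝ)
        else -∑ i, (a i : ℝ)))).ncard
      = Nat.card {T : Fin n → Fin n → Bool // IsTesler a T ∧ TeslerDimZero T} := by
  change (Set.extremePoints ℝ (flowPolytope n (augmentedNetflow a))).ncard = _
  rw [← Nat.card_coe_set_eq]
  exact Nat.card_eq_of_bijective _ (vertexTableau_bijective a)
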